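/- Let N = 1. For every n ∈ ℕ, the function i h_n belongs to 𝓗_n; consequently, for every m ∈ ℕ, span_ℝ{i h₀, i h₁, …, i h_m} ⊆ 𝓗_m. -/

import Mathlib

open MeasureTheory Filter Set
open scoped ENNReal Topology BigOperators

noncomputable section

/-- The Fourier integral with normalization `(2π)^{-N/2} ∫ e^{-i⟨x,ξ⟩} f(x) dx`,
meaningful for integrable `f`. -/
def fourierIntegralC (N : ℕ) (f : EuclideanSpace ℝ (Fin N) → ℂ)
    (ξ : EuclideanSpace ℝ (Fin N)) : ℂ :=
  ((2 * Real.pi : ℝ) ^ (-(N : ℝ) / 2) : ℝ) •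
    ∫ x : EuclideanSpace ℝ (Fin N), Complex.exp (-Complex.I * ((inner ℝ x ξ : ℝ) : ℂ)) * f x

/-- The inverse Fourier integral `(2π)^{-N/2} ∫ e^{i⟨x,ξ⟩} f(ξ) dξ`. -/
def fourierIntegralInvC (N : ℕ) (f : EuclideanSpace ℝ (Fin N) → ℂ)
    (x : EuclideanSpace ℝ (Fin N)) : ℂ :=
  ((2 * Real.pi : ℝ) ^ (-(N : ℝ) / 2) : ℝ) •
    ∫ ξ : EuclideanSpace ℝ (Fin N), Complex.exp (Complex.I * ((inner ℝ x ξ : ℝ) : ℂ)) * f ξ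

/-- `g` is the image of `f ∈ L²` under the continuous (Plancherel) extension of the
integral transform `K` defined on `L¹ ∩ L²`. -/
def IsPlancherelExtensionOf (N : ℕ)
    (K : (EuclideanSpace ℝ (Fin N) → ℂ) → EuclideanSpace ℝ (Fin N) → ℂ)
    (f g : EuclideanSpace ℝ (Fin N) → ℂ) : Prop :=
  MemLp f 2 (volume : Measure (EuclideanSpace ℝ (Fin N))) ∧ MemLp g 2 volume ∧
  ∃ φ : ℕ → EuclideanSpace ℝ (Fin N) → ℂ,
    (∀ n, Integrable (φ n) volume ∧ MemLp (φ n) 2 volume) ∧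
    Tendsto (fun n => eLpNorm (fun x => f x - φ n x) 2 volume) atTop (𝓝 0) ∧
    Tendsto (fun n => eLpNorm (fun ξ => g ξ - K (φ n) ξ) 2 volume) atTop (𝓝 0)

open Classical in
/-- The unitary Fourier–Plancherel transform `𝓕` on `L²(ℝᴺ,ℂ)` (an arbitrary
representative; it is well defined up to a.e. equality, and junk if `f ∉ L²`). -/
def fourierL2 (N : ℕ) (f : EuclideanSpace ℝ (Fin N) → ℂ) :
    EuclideanSpace ℝ (Fin N) → ℂ :=
  if h : ∃ g, IsPlancherelExtensionOf N (fourierIntegralC N) f g then h.choose else 0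

open Classical in
/-- The inverse Fourier–Plancherel transform `𝓕⁻¹` on `L²(ℝᴺ,ℂ)`. -/
def fourierL2Inv (N : ℕ) (f : EuclideanSpace ℝ (Fin N) → ℂ) :
    EuclideanSpace ℝ (Fin N) → ℂ :=
  if h : ∃ g, IsPlancherelExtensionOf N (fourierIntegralInvC N) f g then h.choose else 0

/-- The Sobolev `Hˢ`-norm `‖ξ ↦ (1+‖ξ‖²)^{s/2} (𝓕 f)(ξ)‖_{L²}`, valued in `ℝ≥0∞`. -/
def HsNorm (N : ℕ) (s : ℝ) (f : EuclideanSpace ℝ (Fin N) → ℂ) : ℝ≥0∞ :=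
  eLpNorm (fun ξ : EuclideanSpace ℝ (Fin N) =>
    (((1 + ‖ξ‖ ^ 2) ^ (s / 2) : ℝ) : ℂ) * fourierL2 N f ξ) 2 volume

/-- Membership in the Sobolev space `Hˢ(ℝᴺ,ℂ)`. -/
def MemHs (N : ℕ) (s : ℝ) (f : EuclideanSpace ℝ (Fin N) → ℂ) : Prop :=
  MemLp f 2 (volume : Measure (EuclideanSpace ℝ (Fin N))) ∧ HsNorm N s f < ⊤

/-- The unitary propagator `U(t,a) = e^{itΔ - i⟨a,P⟩}`, defined on the Fourier side by
multiplication by `e^{-it‖ξ‖² + i⟨a,ξ⟩}`. -/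
def schroU (N : ℕ) (t : ℝ) (a : EuclideanSpace ℝ (Fin N))
    (f : EuclideanSpace ℝ (Fin N) → ℂ) : EuclideanSpace ℝ (Fin N) → ℂ :=
  fourierL2Inv N (fun ξ =>
    Complex.exp (Complex.I * ((-(t * ‖ξ‖ ^ 2) + (inner ℝ a ξ : ℝ) : ℝ) : ℂ)) * fourierL2 N f ξ)

/-- The zeroth Hermite function `h₀(x) = π^{-N/4} e^{-‖x‖²/2}` in dimension `N`. -/
def hZero (N : ℕ) (x : EuclideanSpace ℝ (Fin N)) : ℝ :=
  Real.pi ^ (-(N : ℝ) / 4) * Real.exp (-‖x‖ ^ 2 / 2)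

/-- Continuity of a curve of states with respect to the `Hˢ`-distance, on a time set `I`. -/
def ContinuousInHs (N : ℕ) (s : ℝ) (I : Set ℝ)
    (ψ : ℝ → EuclideanSpace ℝ (Fin N) → ℂ) : Prop :=
  ∀ t ∈ I, ∀ ε : ℝ, 0 < ε → ∃ δ > (0:ℝ), ∀ t' ∈ I, |t' - t| < δ →
    HsNorm N s (fun x => ψ t' x - ψ t x) < ENNReal.ofReal ε

/-- Mild solution of (NLS)
`i∂ₜψ = (-Δ + u₀(t) h₀ + ⟨u(t),P⟩ + κ|ψ|^{2p})ψ` with initial state `ψ₀` on the time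
set `I`: a curve, continuous in `Hˢ`, with `ψ(0)=ψ₀`, satisfying the Duhamel formula
`ψ(t) = U(t,∫₀ᵗu)ψ₀ - i∫₀ᵗ U(t-τ,∫_τᵗu)[(u₀(τ)h₀ + κ|ψ(τ)|^{2p})ψ(τ)] dτ`. -/
def IsMildSolution (N : ℕ) (s : ℝ) (p : ℕ) (κ : ℝ)
    (u₀ : ℝ → ℝ) (u : ℝ → EuclideanSpace ℝ (Fin N)) (I : Set ℝ)
    (ψ₀ : EuclideanSpace ℝ (Fin N) → ℂ)
    (ψ : ℝ → EuclideanSpace ℝ (Fin N) → ℂ) : Prop :=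
  ψ 0 = ψ₀ ∧ (∀ t ∈ I, MemHs N s (ψ t)) ∧ ContinuousInHs N s I ψ ∧
  ∀ t ∈ I, ψ t =ᵐ[(volume : Measure (EuclideanSpace ℝ (Fin N)))] fun x =>
    schroU N t (∫ r in (0:ℝ)..t, u r) ψ₀ x -
      Complex.I * ∫ τ in (0:ℝ)..t,
        schroU N (t - τ) (∫ r in τ..t, u r)
          (fun y => (((u₀ τ * hZero N y : ℝ) : ℂ) +
            (κ : ℂ) * ((‖ψ τ y‖ ^ (2 * p) : ℝ) : ℂ)) * ψ τ y) x

/-- `f` is piecewise constant on `[a,b]`. -/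
def PiecewiseConstOn {E : Type*} (f : ℝ → E) (a b : ℝ) : Prop :=
  ∃ n : ℕ, ∃ t : Fin (n + 1) → ℝ, t 0 = a ∧ t (Fin.last n) = b ∧ Monotone t ∧
    ∀ i : Fin n, ∀ x ∈ Set.Ico (t i.castSucc) (t i.succ), f x = f (t i.castSucc)

/-- The `n`-th Hermite function
`hₙ(x) = (−1)ⁿ (2ⁿ n! √π)^{−1/2} e^{x²/2} (dⁿ/dxⁿ) e^{−x²}`. -/
def hermiteFn (n : ℕ) (x : ℝ) : ℝ :=
  (-1 : ℝ) ^ n * ((2 ^ n * n.factorial * Real.sqrt Real.pi : ℝ) ^ (-(1 : ℝ) / 2)) *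
    Real.exp (x ^ 2 / 2) * (deriv^[n] fun y : ℝ => Real.exp (-y ^ 2)) x

/-- The tensor product of one-dimensional Hermite functions. -/
def hermiteTensor (N : ℕ) (m : Fin N → ℕ) (x : EuclideanSpace ℝ (Fin N)) : ℝ :=
  ∏ j, hermiteFn (m j) (x j)

/-- The momentum operator `P_k = i ∂/∂x_k`. -/
def Pop (N : ℕ) (k : Fin N) (f : EuclideanSpace ℝ (Fin N) → ℂ) :
    EuclideanSpace ℝ (Fin N) → ℂ :=
  fun x => Complex.I * fderiv ℝ f x (EuclideanSpace.single k 1)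

/-- The saturation spaces: `𝓗₀ = span_ℝ {i h_{0,…,0}}` and
`𝓗_{j+1} = {φ₀ + i ∑ₖ P_k φ_k : φ₀, φ₁, …, φ_N ∈ 𝓗_j}`. -/
def Hspace (N : ℕ) : ℕ → Set (EuclideanSpace ℝ (Fin N) → ℂ)
  | 0 => {f | ∃ c : ℝ, f = fun x => (c : ℂ) * Complex.I * (hermiteTensor N (fun _ => 0) x : ℂ)}
  | j + 1 => {f | ∃ φ₀ ∈ Hspace N j, ∃ φ : Fin N → EuclideanSpace ℝ (Fin N) → ℂ,
      (∀ k, φ k ∈ Hspace N j) ∧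
      f = fun x => φ₀ x + Complex.I * ∑ k : Fin N, Pop N k (φ k) x}

/-- `D^α f = 𝓕⁻¹[ξ ↦ (iξ)^α (𝓕 f)(ξ)]` for a multi-index `α`. -/
def Dop (N : ℕ) (α : Fin N → ℕ) (f : EuclideanSpace ℝ (Fin N) → ℂ) :
    EuclideanSpace ℝ (Fin N) → ℂ :=
  fourierL2Inv N fun ξ => (∏ k, (Complex.I * ((ξ k : ℝ) : ℂ)) ^ α k) * fourierL2 N f ξ

open Classical in
/-- The localized Sobolev norm `‖f‖_{Hˢ(S)} = (Σ_{|α|≤s} ‖1_S · D^α f‖²_{L²})^{1/2}`. -/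
def HsNormOn (N s : ℕ) (S : Set (EuclideanSpace ℝ (Fin N)))
    (f : EuclideanSpace ℝ (Fin N) → ℂ) : ℝ≥0∞ :=
  (∑ α ∈ (Fintype.piFinset fun _ : Fin N => Finset.range (s + 1)).filter
      (fun α => ∑ k, α k ≤ s),
    eLpNorm (S.indicator (Dop N α f)) 2 volume ^ 2) ^ (1 / 2 : ℝ)

/-- The state `φ_{ζ,S}(x) = (ρ_S(x)/|S|) e^{i⟨ζ,x⟩}`. -/
def phiS (N : ℕ) (S : Set (EuclideanSpace ℝ (Fin N)))
    (ρ : EuclideanSpace ℝ (Fin N) → ℝ) (ζ x : EuclideanSpace ℝ (Fin N)) : ℂ :=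
  ((ρ x / (volume S).toReal : ℝ) : ℂ) * Complex.exp (Complex.I * ((inner ℝ ζ x : ℝ) : ℂ))

/-! With the physicists' Hermite polynomials (`Hₙ₊₁ = 2X Hₙ - Hₙ'`, `Hₙ' = 2n Hₙ₋₁`) one has
`hₙ = cₙ Hₙ(x) e^{-x²/2}`, whence the ladder identity `hₙ' = √(n/2) hₙ₋₁ - √((n+1)/2) hₙ₊₁`.
As `iP = -d/dx`, it writes `i hₘ₊₁` as a multiple of `i hₘ₋₁` plus `iP` applied to a multiple of
`i hₘ`, both in `span{i h₀, …, i hₘ}`; so by induction on `m` this span lies in `𝓗ₘ`. -/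

open Polynomial

def physHermite : ℕ → ℝ[X]
  | 0 => 1
  | n + 1 => 2 * X * physHermite n - derivative (physHermite n)

lemma physHermite_succ (n : ℕ) :
    physHermite (n + 1) = 2 * X * physHermite n - derivative (physHermite n) := rfl

lemma derivative_physHermite (n : ℕ) :
    derivative (physHermite n) = C (2 * n : ℝ) * physHermite (n - 1) := by
  induction n with
  | zero => simp [physHermite]
  | succ k ih =>
    rw [physHermite_succ, derivative_sub, derivative_mul, derivative_mul, ih, derivative_C_mul]
    cases k with
    | zero => simp [physHermite, ← map_ofNat C 2]
    | succ k =>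
      simp only [Nat.add_sub_cancel, physHermite_succ k, derivative_ofNat, derivative_X,
        map_mul, map_natCast, map_ofNat]
      push_cast
      ring

lemma iterate_deriv_exp_neg_sq (n : ℕ) (x : ℝ) :
    deriv^[n] (fun y : ℝ => Real.exp (-y ^ 2)) x
      = (-1) ^ n * (physHermite n).eval x * Real.exp (-x ^ 2) := by
  induction n generalizing x with
  | zero => simp [physHermite]
  | succ k ih =>
    have hexp :
        HasDerivAt (fun y : ℝ => Real.exp (-y ^ 2)) (-(2 * x) * Real.exp (-x ^ 2)) x := by
      simpa [mul_comm] using ((hasDerivAt_pow 2 x).neg).exp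
    have hd := (((physHermite k).hasDerivAt x).const_mul ((-1 : ℝ) ^ k)).fun_mul hexp
    rw [Function.iterate_succ_apply', funext ih, hd.deriv, physHermite_succ]
    simp only [eval_sub, eval_mul, eval_ofNat, eval_X]
    ring

def hermiteConst (n : ℕ) : ℝ := (2 ^ n * n.factorial * Real.sqrt Real.pi) ^ (-(1 : ℝ) / 2)

lemma hermiteFn_eq (n : ℕ) (x : ℝ) :
    hermiteFn n x = hermiteConst n * (physHermite n).eval x * Real.exp (-x ^ 2 / 2) := by
  have hexp : Real.exp (x ^ 2 / 2) * Real.exp (-x ^ 2) = Real.exp (-x ^ 2 / 2) := by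
    rw [← Real.exp_add]; ring_nf
  rw [hermiteFn, iterate_deriv_exp_neg_sq, ← hexp, ← hermiteConst]
  linear_combination (hermiteConst n * (physHermite n).eval x * Real.exp (x ^ 2 / 2)
    * Real.exp (-x ^ 2)) * (by rw [← mul_pow]; norm_num : ((-1 : ℝ) ^ n * (-1) ^ n = 1))

lemma hermiteConst_eq_sqrt_mul_succ (n : ℕ) :
    hermiteConst n = Real.sqrt (2 * (n + 1)) * hermiteConst (n + 1) := by
  have hn : (0 : ℝ) < 2 * (n + 1) := by positivity
  have hbase : (2 ^ (n + 1) * (n + 1).factorial * Real.sqrt Real.pi : ℝ)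
      = 2 * (n + 1) * (2 ^ n * n.factorial * Real.sqrt Real.pi) := by
    push_cast [Nat.factorial_succ]; ring
  rw [hermiteConst, hermiteConst, hbase, Real.mul_rpow hn.le (by positivity), ← mul_assoc,
    Real.sqrt_eq_rpow (2 * (n + 1)), ← Real.rpow_add hn]
  norm_num

lemma sqrt_half_mul_hermiteConst_succ (n : ℕ) :
    Real.sqrt ((n + 1) / 2) * hermiteConst (n + 1) = hermiteConst n / 2 := by
  have h : Real.sqrt (2 * (n + 1)) = 2 * Real.sqrt ((n + 1) / 2) := by
    rw [show (2 : ℝ) * (n + 1) = 2 ^ 2 * ((n + 1) / 2) by ring, Real.sqrt_mul (by norm_num),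
      Real.sqrt_sq zero_le_two]
  rw [hermiteConst_eq_sqrt_mul_succ n, h]
  ring

lemma sqrt_half_mul_hermiteConst_pred (n : ℕ) :
    Real.sqrt (n / 2) * hermiteConst (n - 1) = n * hermiteConst n := by
  cases n with
  | zero => simp
  | succ k =>
    have h : Real.sqrt ((k + 1) / 2) * Real.sqrt (2 * (k + 1)) = k + 1 := by
      rw [← Real.sqrt_mul (by positivity),
        show ((k : ℝ) + 1) / 2 * (2 * (k + 1)) = (k + 1) ^ 2 by ring, Real.sqrt_sq (by positivity)]
    rw [Nat.add_sub_cancel, hermiteConst_eq_sqrt_mul_succ k, ← mul_assoc]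
    push_cast
    rw [h]

-- At `n = 0` the truncated `n - 1` is harmless: its coefficient is `√0`.
lemma hasDerivAt_hermiteFn (n : ℕ) (x : ℝ) :
    HasDerivAt (hermiteFn n)
      (Real.sqrt (n / 2) * hermiteFn (n - 1) x - Real.sqrt ((n + 1) / 2) * hermiteFn (n + 1) x)
      x := by
  have hgauss :
      HasDerivAt (fun y : ℝ => Real.exp (-y ^ 2 / 2)) (-x * Real.exp (-x ^ 2 / 2)) x := by
    simpa [mul_comm, neg_div] using (((hasDerivAt_pow 2 x).neg).div_const 2).exp
  have hd := (((physHermite n).hasDerivAt x).const_mul (hermiteConst n)).fun_mul hgauss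
  rw [show hermiteFn n = _ from funext (hermiteFn_eq n)]
  refine hd.congr_deriv ?_
  rw [hermiteFn_eq, hermiteFn_eq, physHermite_succ, derivative_physHermite]
  simp only [eval_sub, eval_mul, eval_ofNat, eval_X, eval_C]
  linear_combination (2 * x * (physHermite n).eval x - 2 * n * (physHermite (n - 1)).eval x)
      * Real.exp (-x ^ 2 / 2) * sqrt_half_mul_hermiteConst_succ n
    - (physHermite (n - 1)).eval x * Real.exp (-x ^ 2 / 2) * sqrt_half_mul_hermiteConst_pred n

lemma hermiteFn_succ_eq (n : ℕ) (x : ℝ) :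
    hermiteFn (n + 1) x
      = (Real.sqrt (n / 2) * hermiteFn (n - 1) x - deriv (hermiteFn n) x)
        / Real.sqrt ((n + 1) / 2) := by
  have hs : Real.sqrt ((n + 1) / 2) ≠ 0 := by positivity
  rw [(hasDerivAt_hermiteFn n x).deriv]
  field_simp
  ring

lemma Pop_apply_comp_coord {N : ℕ} (k : Fin N) {f : ℝ → ℂ} {f' : ℂ} {x : EuclideanSpace ℝ (Fin N)}
    (hf : HasDerivAt f f' (x k)) : Pop N k (fun y => f (y k)) x = Complex.I * f' := by
  have hcoord : HasFDerivAt (fun y : EuclideanSpace ℝ (Fin N) => y k)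
      (EuclideanSpace.proj k : EuclideanSpace ℝ (Fin N) →L[ℝ] ℝ) x :=
    (EuclideanSpace.proj k : EuclideanSpace ℝ (Fin N) →L[ℝ] ℝ).hasFDerivAt
  have hF : HasFDerivAt (fun y => f (y k)) _ x := hf.hasFDerivAt.comp x hcoord
  rw [Pop, hF.fderiv]
  simp

def ihermite (n : ℕ) : EuclideanSpace ℝ (Fin 1) → ℂ :=
  fun x => Complex.I * ((hermiteFn n (x 0) : ℝ) : ℂ)

lemma Pop_smul_ihermite (c : ℝ) (n : ℕ) (x : EuclideanSpace ℝ (Fin 1)) :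
    Pop 1 0 (c • ihermite n) x = -(c * deriv (hermiteFn n) (x 0)) := by
  have hf : HasDerivAt (fun t : ℝ => (c : ℂ) * (Complex.I * (hermiteFn n t : ℂ)))
      ((c : ℂ) * (Complex.I * ((deriv (hermiteFn n) (x 0) : ℝ) : ℂ))) (x 0) := by
    have h := (hasDerivAt_hermiteFn n (x 0)).differentiableAt.hasDerivAt
    exact (h.ofReal_comp.const_mul Complex.I).const_mul (c : ℂ)
  have hfun : c • ihermite n = fun y => (c : ℂ) * (Complex.I * (hermiteFn n (y 0) : ℂ)) := by
    funext y; simp [ihermite, Complex.real_smul]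
  rw [hfun, Pop_apply_comp_coord 0 hf]
  push_cast
  linear_combination (c * deriv (hermiteFn n) (x 0) : ℂ) * Complex.I_sq

lemma smul_ihermite_zero_mem_Hspace (c : ℝ) : c • ihermite 0 ∈ Hspace 1 0 :=
  ⟨c, funext fun x => by simp [ihermite, hermiteTensor, Complex.real_smul, mul_assoc]⟩

lemma mem_Hspace_one_succ {m : ℕ} {φ₀ φ₁ : EuclideanSpace ℝ (Fin 1) → ℂ}
    (h₀ : φ₀ ∈ Hspace 1 m) (h₁ : φ₁ ∈ Hspace 1 m) :
    (fun x => φ₀ x + Complex.I * Pop 1 0 φ₁ x) ∈ Hspace 1 (m + 1) :=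
  ⟨φ₀, h₀, fun _ => φ₁, fun _ => h₁, by simp⟩

def hermiteSpan (m : ℕ) : Submodule ℝ (EuclideanSpace ℝ (Fin 1) → ℂ) :=
  Submodule.span ℝ {f | ∃ n ≤ m, f = ihermite n}

lemma hermiteSpan_zero : hermiteSpan 0 = Submodule.span ℝ {ihermite 0} := by
  simp [hermiteSpan]

lemma hermiteSpan_succ (m : ℕ) :
    hermiteSpan (m + 1)
      = Submodule.span ℝ (insert (ihermite (m + 1)) {f | ∃ n ≤ m, f = ihermite n}) := by
  rw [hermiteSpan]
  congr 1
  ext f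
  simp [Nat.le_succ_iff, or_and_right, exists_or, or_comm]

lemma ihermite_mem_hermiteSpan {n m : ℕ} (h : n ≤ m) : ihermite n ∈ hermiteSpan m :=
  Submodule.subset_span ⟨n, h, rfl⟩

theorem hermiteSpan_subset_Hspace (m : ℕ) :
    (hermiteSpan m : Set (EuclideanSpace ℝ (Fin 1) → ℂ)) ⊆ Hspace 1 m := by
  induction m with
  | zero =>
    intro g hg
    rw [SetLike.mem_coe, hermiteSpan_zero, Submodule.mem_span_singleton] at hg
    obtain ⟨c, rfl⟩ := hg
    exact smul_ihermite_zero_mem_Hspace c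
  | succ m ih =>
    intro g hg
    rw [SetLike.mem_coe, hermiteSpan_succ, Submodule.mem_span_insert] at hg
    obtain ⟨a, z, hz, rfl⟩ := hg
    set s := Real.sqrt ((m + 1) / 2)
    have hφ₀ : z + (a * Real.sqrt (m / 2) / s) • ihermite (m - 1) ∈ hermiteSpan m :=
      add_mem hz (Submodule.smul_mem _ _ (ihermite_mem_hermiteSpan (Nat.sub_le m 1)))
    have hφ₁ : (a / s) • ihermite m ∈ hermiteSpan m :=
      Submodule.smul_mem _ _ (ihermite_mem_hermiteSpan le_rfl)
    convert mem_Hspace_one_succ (ih hφ₀) (ih hφ₁) using 1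
    funext x
    simp only [Pi.add_apply, Pi.smul_apply, Pop_smul_ihermite, ihermite, hermiteFn_succ_eq,
      Complex.real_smul]
    push_cast
    ring

theorem statement12 :
    (∀ n : ℕ,
      (fun x : EuclideanSpace ℝ (Fin 1) => Complex.I * ((hermiteFn n (x 0) : ℝ) : ℂ)) ∈
        Hspace 1 n) ∧
    ∀ m : ℕ, ∀ g ∈ Submodule.span ℝ
        {f : EuclideanSpace ℝ (Fin 1) → ℂ |
          ∃ n ≤ m, f = fun x => Complex.I * ((hermiteFn n (x 0) : ℝ) : ℂ)},
      g ∈ Hspace 1 m :=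
  ⟨fun n => hermiteSpan_subset_Hspace n (ihermite_mem_hermiteSpan le_rfl),
    fun m _ hg => hermiteSpan_subset_Hspace m hg⟩

end
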